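/- arXiv:2504.12233 — 3 statements merged into one kernel-verified Lean document; each statement's English description precedes it below -/
import Mathlib

section
/- Let d ≥ 2, let Π be an orthogonal projection of rank r on ℂ^d, and let A, B be arbitrary d×d complex matrices. Then ∫ Tr(UΠUᴴ · A · UΠUᴴ · B) dμ_d(U) = [r(rd−1)·Tr(AB) + r(d−r)·Tr(A)·Tr(B)] / (d(d²−1)). -/
/-!
Averaging `(UΠUᴴ) ⊗ (UΠUᴴ) = (U ⊗ U)(Π ⊗ Π)(U ⊗ U)ᴴ` over the Haar measure gives a matrix
commuting with every `V ⊗ V`, by left invariance. Such a matrix is `a • 1 + b • F`, with `F` the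
swap of the two tensor factors: diagonal unitaries kill every entry `(i,j),(k,l)` with
`{k,l} ≠ {i,j}`, permutation matrices make the two surviving families of entries constant, and a
Householder reflection mixing two basis vectors forces each diagonal entry to be their sum.
Tracing against `1` and `F` gives `a d² + b d = (tr Π)² = r²` and `a d + b d² = tr Π² = r`, and
the integral is the trace of `a • 1 + b • F` against `(A ⊗ B) F`, namely `a tr(AB) + b tr A tr B`.
-/

open Matrix MeasureTheory
open scoped Kronecker Matrix.Norms.L2Operator

namespace Matrix

variable {n R : Type*} [Fintype n] [DecidableEq n]

def tensorSwap (n R : Type*) [DecidableEq n] [Zero R] [One R] : Matrix (n × n) (n × n) R :=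
  Equiv.Perm.permMatrix R (Equiv.prodComm n n)

omit [Fintype n] in
lemma tensorSwap_apply [Zero R] [One R] (p q : n × n) :
    tensorSwap n R p q = if q = p.swap then 1 else 0 := by
  simp [tensorSwap, PEquiv.toMatrix_apply, eq_comm]

section CommSemiring

variable [CommSemiring R]

lemma tensorSwap_mul_kronecker (A B : Matrix n n R) :
    tensorSwap n R * (A ⊗ₖ B) = (B ⊗ₖ A) * tensorSwap n R := by
  ext p q
  simp [tensorSwap, PEquiv.toMatrix_toPEquiv_mul, PEquiv.mul_toMatrix_toPEquiv, mul_comm]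

lemma tensorSwap_mul_tensorSwap : tensorSwap n R * tensorSwap n R = 1 := by
  rw [tensorSwap, ← permMatrix_mul]
  convert permMatrix_one (n := n × n) (R := R)
  ext <;> simp

lemma trace_kronecker_mul_tensorSwap (A B : Matrix n n R) :
    ((A ⊗ₖ B) * tensorSwap n R).trace = (A * B).trace := by
  simp [tensorSwap, trace, PEquiv.mul_toMatrix_toPEquiv, mul_apply, Fintype.sum_prod_type]

lemma trace_kronecker_mul_kronecker_mul_tensorSwap (X X' A B : Matrix n n R) :
    ((X ⊗ₖ X') * ((A ⊗ₖ B) * tensorSwap n R)).trace = (X * A * X' * B).trace := by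
  rw [← mul_assoc, ← mul_kronecker_mul, trace_kronecker_mul_tensorSwap]
  simp only [mul_assoc]

lemma trace_tensorSwap_mul_kronecker_mul_tensorSwap (A B : Matrix n n R) :
    (tensorSwap n R * ((A ⊗ₖ B) * tensorSwap n R)).trace = A.trace * B.trace := by
  rw [← mul_assoc, tensorSwap_mul_kronecker, mul_assoc, tensorSwap_mul_tensorSwap, mul_one,
    trace_kronecker, mul_comm]

lemma trace_tensorSwap : (tensorSwap n R).trace = Fintype.card n := by
  simpa using trace_kronecker_mul_tensorSwap (1 : Matrix n n R) 1

end CommSemiring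

lemma trace_eq_rank_of_isIdempotentElem {K : Type*} [Field K] {X : Matrix n n K}
    (hX : IsIdempotentElem X) : X.trace = X.rank := by
  have hlin : IsIdempotentElem X.mulVecLin := by
    rw [IsIdempotentElem, Module.End.mul_eq_comp, ← mulVecLin_mul, hX.eq]
  rw [rank, ← (LinearMap.IsIdempotentElem.isProj_range _ hlin).trace, ← Matrix.toLin'_apply',
    LinearMap.trace_eq_matrix_trace K (Pi.basisFun K n)]
  simp

section Unitary

variable [CommRing R] [StarRing R]

lemma permMatrix_mem_unitaryGroup (σ : Equiv.Perm n) : σ.permMatrix R ∈ unitaryGroup n R := by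
  rw [mem_unitaryGroup_iff, star_eq_conjTranspose, conjTranspose_permMatrix, ← permMatrix_mul,
    inv_mul_cancel, permMatrix_one]

lemma diagonal_mem_unitaryGroup {z : n → R} (hz : ∀ i, star (z i) * z i = 1) :
    diagonal z ∈ unitaryGroup n R := by
  rw [mem_unitaryGroup_iff', star_eq_conjTranspose, diagonal_conjTranspose, diagonal_mul_diagonal]
  exact diagonal_eq_one.mpr (funext hz)

def householder (v : n → R) : Matrix n n R := 1 - (2 : R) • vecMulVec v (star v)

omit [Fintype n] in
lemma householder_apply (v : n → R) (a b : n) :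
    householder v a b = (if a = b then 1 else 0) - 2 * (v a * star (v b)) := by
  simp [householder, one_apply, vecMulVec_apply]

lemma householder_mem_unitaryGroup {v : n → R} (hv : star v ⬝ᵥ v = 1) :
    householder v ∈ unitaryGroup n R := by
  have hidem : vecMulVec v (star v) * vecMulVec v (star v) = vecMulVec v (star v) := by
    rw [vecMulVec_mul_vecMulVec, hv, one_smul]
  rw [mem_unitaryGroup_iff, star_eq_conjTranspose, householder, conjTranspose_sub,
    conjTranspose_one, conjTranspose_smul, conjTranspose_vecMulVec, star_star, star_ofNat]
  simp only [sub_mul, mul_sub, one_mul, mul_one, smul_mul_smul_comm, hidem]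
  module

end Unitary

omit [Fintype n] in
lemma kronecker_permMatrix [Semiring R] (σ τ : Equiv.Perm n) :
    σ.permMatrix R ⊗ₖ τ.permMatrix R = Equiv.Perm.permMatrix R (σ.prodCongr τ) := by
  ext p q
  simp [PEquiv.toMatrix_apply, Prod.ext_iff, ← ite_and, and_comm]

lemma submatrix_eq_of_commute_permMatrix [NonAssocSemiring R] {M : Matrix n n R}
    {σ : Equiv.Perm n} (h : Commute (σ.permMatrix R) M) : M.submatrix σ σ = M := by
  have h' := h.eq
  rw [PEquiv.toMatrix_toPEquiv_mul, PEquiv.mul_toMatrix_toPEquiv] at h'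
  ext p q
  simpa using congr_fun (congr_fun h' p) (σ q)

end Matrix

lemma Complex.eq_of_I_pow_eq {a b : ℕ} (ha : a ≤ 2) (hb : b ≤ 2) (h : I ^ a = I ^ b) : a = b := by
  revert h
  interval_cases a <;> interval_cases b <;> norm_num [Complex.ext_iff]

namespace Matrix

variable {n : Type*} [Fintype n] [DecidableEq n]

def CommutesWithTensorSquares (M : Matrix (n × n) (n × n) ℂ) : Prop :=
  ∀ V ∈ unitaryGroup n ℂ, Commute (V ⊗ₖ V) M

namespace CommutesWithTensorSquares

variable {M : Matrix (n × n) (n × n) ℂ} (hM : CommutesWithTensorSquares M)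
include hM

lemma apply_perm (σ : Equiv.Perm n) (i j k l : n) :
    M (σ i, σ j) (σ k, σ l) = M (i, j) (k, l) := by
  have hσ : Commute (Equiv.Perm.permMatrix ℂ (σ.prodCongr σ)) M := by
    rw [← kronecker_permMatrix]
    exact hM _ (permMatrix_mem_unitaryGroup σ)
  exact congr_fun (congr_fun (submatrix_eq_of_commute_permMatrix hσ) (i, j)) (k, l)

lemma phase_mul_apply {z : n → ℂ} (hz : ∀ i, star (z i) * z i = 1) (i j k l : n) :
    z i * z j * M (i, j) (k, l) = M (i, j) (k, l) * (z k * z l) := by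
  have h := congr_fun (congr_fun (hM _ (diagonal_mem_unitaryGroup hz)).eq (i, j)) (k, l)
  rwa [diagonal_kronecker_diagonal, diagonal_mul, mul_diagonal] at h

lemma apply_eq_zero {i j k l : n} (h₁ : (k, l) ≠ (i, j)) (h₂ : (k, l) ≠ (j, i)) :
    M (i, j) (k, l) = 0 := by
  by_contra hne
  -- The phase `I` on the single coordinate `p` counts how often `p` occurs in each pair.
  have hcount : ∀ p, ((if i = p then 1 else 0) + (if j = p then 1 else 0) : ℕ) =
      (if k = p then 1 else 0) + (if l = p then 1 else 0) := by
    intro p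
    have hz : ∀ m, star (Complex.I ^ (if m = p then 1 else 0)) *
        Complex.I ^ (if m = p then 1 else 0) = 1 := by
      intro m
      split_ifs <;> simp
    have h := phase_mul_apply hM hz i j k l
    rw [mul_comm (M _ _), mul_left_inj' hne, ← pow_add, ← pow_add] at h
    exact Complex.eq_of_I_pow_eq (by split_ifs <;> simp) (by split_ifs <;> simp) h
  have hi := hcount i
  have hj := hcount j
  simp only [ne_eq, Prod.ext_iff] at h₁ h₂
  split_ifs at hi hj <;> grind

lemma apply_diag {i j : n} (hij : i ≠ j) :
    M (i, i) (i, i) = M (i, j) (i, j) + M (i, j) (j, i) := by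
  -- Unequal weights make both `V i i` and `V j i` nonzero.
  set v : n → ℂ := Pi.single i (3 / 5) + Pi.single j (4 / 5)
  have hv : star v ⬝ᵥ v = 1 := by
    norm_num [v, dotProduct, Pi.single_apply, Finset.sum_add_distrib, add_mul, mul_add, hij,
      hij.symm, map_ofNat]
  set V := householder v
  have hV : V i i * V j i ≠ 0 := by
    norm_num [V, householder_apply, v, hij, hij.symm]
  have h := congr_fun (congr_fun (hM V (householder_mem_unitaryGroup hv)).eq (i, j)) (i, i)
  rw [mul_apply, mul_apply, Finset.sum_eq_single (i, i), Fintype.sum_eq_add (i, j) (j, i)] at h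
  · simp only [kroneckerMap_apply] at h
    apply mul_left_cancel₀ hV
    linear_combination h
  · simp [Prod.ext_iff, hij]
  · rintro ⟨a, b⟩ ⟨h₁, h₂⟩
    rw [apply_eq_zero hM h₁ h₂, zero_mul]
  · rintro ⟨a, b⟩ - hab
    rw [apply_eq_zero hM (by simpa [eq_comm] using hab) (by grind), mul_zero]
  · simp

theorem eq_smul_one_add_smul_tensorSwap [Nontrivial n] :
    ∃ a b : ℂ, M = a • 1 + b • tensorSwap n ℂ := by
  obtain ⟨i₀, i₁, h₀₁⟩ := exists_pair_ne n
  have hpair : ∀ {i j}, i ≠ j → ∃ σ : Equiv.Perm n, σ i₀ = i ∧ σ i₁ = j := fun hij => by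
    obtain ⟨σ, hσ⟩ := Equiv.Perm.exists_extending_pair ![i₀, i₁] ![_, _]
      (injective_pair_iff_ne.mpr h₀₁) (injective_pair_iff_ne.mpr hij)
    exact ⟨σ, hσ 0, hσ 1⟩
  have hx : ∀ {i j}, i ≠ j → M (i, j) (i, j) = M (i₀, i₁) (i₀, i₁) := fun hij => by
    obtain ⟨σ, rfl, rfl⟩ := hpair hij
    exact apply_perm hM σ _ _ _ _
  have hy : ∀ {i j}, i ≠ j → M (i, j) (j, i) = M (i₀, i₁) (i₁, i₀) := fun hij => by
    obtain ⟨σ, rfl, rfl⟩ := hpair hij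
    exact apply_perm hM σ _ _ _ _
  refine ⟨M (i₀, i₁) (i₀, i₁), M (i₀, i₁) (i₁, i₀), ?_⟩
  ext ⟨i, j⟩ ⟨k, l⟩
  simp only [add_apply, smul_apply, one_apply, tensorSwap_apply, Prod.swap_prod_mk, smul_eq_mul]
  by_cases h₁ : (k, l) = (i, j)
  · obtain ⟨rfl, rfl⟩ := Prod.ext_iff.mp h₁
    by_cases hkl : k = l
    · subst hkl
      obtain ⟨j, hj⟩ := exists_ne k
      simp [apply_diag hM hj.symm, hx hj.symm, hy hj.symm]
    · simp [hx hkl, hkl]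
  · by_cases h₂ : (k, l) = (j, i)
    · obtain ⟨rfl, rfl⟩ := Prod.ext_iff.mp h₂
      have hlk : l ≠ k := by rintro rfl; exact h₁ rfl
      simp [hy hlk, hlk]
    · simp [apply_eq_zero hM h₁ h₂, h₂, Ne.symm h₁]

end CommutesWithTensorSquares

instance : CompactSpace (unitaryGroup n ℂ) := by
  refine isCompact_iff_compactSpace.mp (Metric.isCompact_of_isClosed_isBounded isClosed_unitary ?_)
  refine (Metric.isBounded_closedBall (x := (0 : Matrix n n ℂ)) (r := ‖(1 : Matrix n n ℂ)‖)).subset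
    fun U hU => ?_
  rw [mem_closedBall_zero_iff, ← CStarRing.norm_mul_mem_unitary 1 hU, one_mul]

def tensorSquare : unitaryGroup n ℂ →* unitaryGroup (n × n) ℂ where
  toFun U := ⟨(U : Matrix n n ℂ) ⊗ₖ (U : Matrix n n ℂ), kronecker_mem_unitary U.2 U.2⟩
  map_one' := Subtype.ext one_kronecker_one
  map_mul' U V := Subtype.ext <| by simp [mul_kronecker_mul]

lemma continuous_tensorSquare :
    Continuous (tensorSquare : unitaryGroup n ℂ →* unitaryGroup (n × n) ℂ) := by
  have hU : Continuous fun U : unitaryGroup n ℂ => (U : Matrix n n ℂ) := continuous_subtype_val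
  refine continuous_induced_rng.2 (continuous_matrix fun p q => ?_)
  exact (hU.matrix_elem p.1 q.1).mul (hU.matrix_elem p.2 q.2)

lemma tensorSquare_mul_kronecker_mul_star (U : unitaryGroup n ℂ) (X : Matrix n n ℂ) :
    (tensorSquare U : Matrix (n × n) (n × n) ℂ) * (X ⊗ₖ X) * star (tensorSquare U : Matrix _ _ ℂ) =
      ((U : Matrix n n ℂ) * X * (U : Matrix n n ℂ)ᴴ) ⊗ₖ
        ((U : Matrix n n ℂ) * X * (U : Matrix n n ℂ)ᴴ) := by
  simp [tensorSquare, star_eq_conjTranspose, conjTranspose_kronecker, mul_kronecker_mul]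

section Twirl

variable {m G : Type*} [Fintype m] [DecidableEq m] [Group G] [MeasurableSpace G]

noncomputable def twirl (μ : Measure G) (ρ : G →* unitaryGroup m ℂ) (Y : Matrix m m ℂ) :
    Matrix m m ℂ :=
  ∫ g, (ρ g : Matrix m m ℂ) * Y * star (ρ g : Matrix m m ℂ) ∂μ

variable [TopologicalSpace G] [CompactSpace G] [BorelSpace G] (μ : Measure G)
  {ρ : G →* unitaryGroup m ℂ}

lemma integrable_unitary_conj [IsFiniteMeasure μ] (hρ : Continuous ρ) (Y : Matrix m m ℂ) :
    Integrable (fun g => (ρ g : Matrix m m ℂ) * Y * star (ρ g : Matrix m m ℂ)) μ := by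
  have hc : Continuous fun g => (ρ g : Matrix m m ℂ) := continuous_subtype_val.comp hρ
  exact ((hc.mul continuous_const).mul hc.star).integrable_of_hasCompactSupport
    (HasCompactSupport.of_compactSpace _)

lemma commute_twirl [ContinuousMul G] [IsFiniteMeasure μ] [μ.IsMulLeftInvariant]
    (hρ : Continuous ρ) (Y : Matrix m m ℂ) (h : G) :
    Commute (ρ h : Matrix m m ℂ) (twirl μ ρ Y) := by
  have hconj : ∀ g, (ρ h : Matrix m m ℂ) * ((ρ g : Matrix m m ℂ) * Y * star (ρ g : Matrix m m ℂ)) =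
      (ρ (h * g) : Matrix m m ℂ) * Y * star (ρ (h * g) : Matrix m m ℂ) * ρ h := by
    intro g
    simp only [map_mul, Submonoid.coe_mul, star_mul, mul_assoc, Unitary.coe_star_mul_self, mul_one]
  calc (ρ h : Matrix m m ℂ) * twirl μ ρ Y
      = ∫ g, (ρ (h * g) : Matrix m m ℂ) * Y * star (ρ (h * g) : Matrix m m ℂ) * ρ h ∂μ := by
        simp only [twirl, ← hconj,
          integral_const_mul_of_integrable (integrable_unitary_conj μ hρ Y)]
    _ = twirl μ ρ Y * ρ h := by
        rw [integral_mul_const_of_integrable ((integrable_unitary_conj μ hρ Y).comp_mul_left h),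
          integral_mul_left_eq_self (fun g => (ρ g : Matrix m m ℂ) * Y * star (ρ g : Matrix m m ℂ)),
          twirl]

lemma trace_twirl_mul [IsFiniteMeasure μ] (hρ : Continuous ρ) (Y C : Matrix m m ℂ) :
    (twirl μ ρ Y * C).trace =
      ∫ g, ((ρ g : Matrix m m ℂ) * Y * star (ρ g : Matrix m m ℂ) * C).trace ∂μ := by
  rw [twirl, ← integral_mul_const_of_integrable (integrable_unitary_conj μ hρ Y)]
  exact ((traceLinearMap m ℂ ℂ).toContinuousLinearMap.integral_comp_comm
    ((integrable_unitary_conj μ hρ Y).mul_const C)).symm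

lemma trace_twirl_mul_of_commute [IsProbabilityMeasure μ] (hρ : Continuous ρ)
    (Y C : Matrix m m ℂ) (hC : ∀ g, Commute (ρ g : Matrix m m ℂ) C) :
    (twirl μ ρ Y * C).trace = (Y * C).trace := by
  have hconj : ∀ g,
      ((ρ g : Matrix m m ℂ) * Y * star (ρ g : Matrix m m ℂ) * C).trace = (Y * C).trace := by
    intro g
    rw [mul_assoc, mul_assoc, trace_mul_comm, mul_assoc, mul_assoc, ← (hC g).eq,
      ← mul_assoc (star _), Unitary.coe_star_mul_self, one_mul]
  simp [trace_twirl_mul μ hρ, hconj]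

end Twirl

section HaarTwirl

variable [MeasurableSpace (unitaryGroup n ℂ)] [BorelSpace (unitaryGroup n ℂ)]
  (μ : Measure (unitaryGroup n ℂ))

lemma commutesWithTensorSquares_twirl [IsFiniteMeasure μ] [μ.IsMulLeftInvariant]
    (Y : Matrix (n × n) (n × n) ℂ) : CommutesWithTensorSquares (twirl μ tensorSquare Y) :=
  fun V hV => commute_twirl μ continuous_tensorSquare Y ⟨V, hV⟩

theorem twirl_tensorSquare_eq [Nontrivial n] [IsProbabilityMeasure μ] [μ.IsMulLeftInvariant]
    (Y : Matrix (n × n) (n × n) ℂ) :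
    twirl μ tensorSquare Y =
      ((Fintype.card n * Y.trace - (Y * tensorSwap n ℂ).trace) /
          (Fintype.card n * ((Fintype.card n : ℂ) ^ 2 - 1))) • 1 +
      ((Fintype.card n * (Y * tensorSwap n ℂ).trace - Y.trace) /
          (Fintype.card n * ((Fintype.card n : ℂ) ^ 2 - 1))) • tensorSwap n ℂ := by
  set d : ℂ := (Fintype.card n : ℂ) with hd
  obtain ⟨a, b, hab⟩ := (commutesWithTensorSquares_twirl μ Y).eq_smul_one_add_smul_tensorSwap
  have h₁ : a * d ^ 2 + b * d = Y.trace := by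
    have h := trace_twirl_mul_of_commute μ continuous_tensorSquare Y 1 fun _ => Commute.one_right _
    rw [mul_one, mul_one, hab, trace_add, trace_smul, trace_smul, trace_one, trace_tensorSwap,
      Fintype.card_prod, Nat.cast_mul, smul_eq_mul, smul_eq_mul] at h
    linear_combination h
  have h₂ : a * d + b * d ^ 2 = (Y * tensorSwap n ℂ).trace := by
    have h := trace_twirl_mul_of_commute μ continuous_tensorSquare Y (tensorSwap n ℂ) fun U =>
      (tensorSwap_mul_kronecker (U : Matrix n n ℂ) U).symm
    rw [hab, add_mul, smul_mul_assoc, smul_mul_assoc, one_mul, tensorSwap_mul_tensorSwap,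
      trace_add, trace_smul, trace_smul, trace_one, trace_tensorSwap, Fintype.card_prod,
      Nat.cast_mul, smul_eq_mul, smul_eq_mul] at h
    linear_combination h
  have hD : d * (d ^ 2 - 1) ≠ 0 := by
    have h1 : 1 < Fintype.card n := Fintype.one_lt_card
    refine mul_ne_zero (Nat.cast_ne_zero.2 (by omega)) (sub_ne_zero.2 ?_)
    rw [hd]
    exact_mod_cast (Nat.one_lt_pow two_ne_zero h1).ne'
  have ha : a = (d * Y.trace - (Y * tensorSwap n ℂ).trace) / (d * (d ^ 2 - 1)) := by
    rw [eq_div_iff hD]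
    linear_combination d * h₁ - h₂
  have hb : b = (d * (Y * tensorSwap n ℂ).trace - Y.trace) / (d * (d ^ 2 - 1)) := by
    rw [eq_div_iff hD]
    linear_combination d * h₂ - h₁
  rw [hab, ha, hb]

end HaarTwirl

end Matrix

theorem haar_second_moment_trace_general {d r : ℕ} (hd : 2 ≤ d)
    [MeasurableSpace (Matrix.unitaryGroup (Fin d) ℂ)]
    [BorelSpace (Matrix.unitaryGroup (Fin d) ℂ)]
    (μ : Measure (Matrix.unitaryGroup (Fin d) ℂ))
    [μ.IsHaarMeasure] [IsProbabilityMeasure μ]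
    (Proj : Matrix (Fin d) (Fin d) ℂ) (hproj : Proj * Proj = Proj) (hrank : Proj.rank = r)
    (A B : Matrix (Fin d) (Fin d) ℂ) :
    (∫ U : Matrix.unitaryGroup (Fin d) ℂ,
        ((U : Matrix (Fin d) (Fin d) ℂ) * Proj * (U : Matrix (Fin d) (Fin d) ℂ)ᴴ * A *
          ((U : Matrix (Fin d) (Fin d) ℂ) * Proj * (U : Matrix (Fin d) (Fin d) ℂ)ᴴ) * B).trace ∂μ)
      = ((r : ℂ) * ((r : ℂ) * (d : ℂ) - 1) * (A * B).trace
          + (r : ℂ) * ((d : ℂ) - (r : ℂ)) * A.trace * B.trace)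
        / ((d : ℂ) * ((d : ℂ) ^ 2 - 1)) := by
  have : Nontrivial (Fin d) := Fin.nontrivial_iff_two_le.mpr hd
  have htrace : Proj.trace = r := hrank ▸ trace_eq_rank_of_isIdempotentElem hproj
  calc _ = (twirl μ tensorSquare (Proj ⊗ₖ Proj) * ((A ⊗ₖ B) * tensorSwap (Fin d) ℂ)).trace := by
        simp only [trace_twirl_mul μ continuous_tensorSquare, tensorSquare_mul_kronecker_mul_star,
          trace_kronecker_mul_kronecker_mul_tensorSwap]
    _ = _ := by
        simp only [twirl_tensorSquare_eq, add_mul, smul_mul_assoc, one_mul, trace_add, trace_smul,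
          trace_kronecker_mul_tensorSwap, trace_tensorSwap_mul_kronecker_mul_tensorSwap,
          trace_kronecker, hproj, htrace, Fintype.card_fin, smul_eq_mul]
        ring

/-- **Second-moment Weingarten formula.**  For the Haar probability measure on `U(d)`, `d ≥ 2`,
a rank-`r` orthogonal projection `Proj` and arbitrary matrices `A, B`:
`∫ Tr(UProjUᴴ A UProjUᴴ B) dμ(U) = [r(rd−1)Tr(AB) + r(d−r)Tr(A)Tr(B)] / (d(d²−1))`. -/
theorem haar_second_moment_trace {d r : ℕ} (hd : 2 ≤ d)
    [MeasurableSpace (Matrix.unitaryGroup (Fin d) ℂ)]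
    [BorelSpace (Matrix.unitaryGroup (Fin d) ℂ)]
    (μ : Measure (Matrix.unitaryGroup (Fin d) ℂ))
    [μ.IsHaarMeasure] [IsProbabilityMeasure μ]
    (Proj : Matrix (Fin d) (Fin d) ℂ) (hproj : Proj * Proj = Proj) (hherm : Projᴴ = Proj) (hrank : Proj.rank = r)
    (A B : Matrix (Fin d) (Fin d) ℂ) :
    (∫ U : Matrix.unitaryGroup (Fin d) ℂ,
        ((U : Matrix (Fin d) (Fin d) ℂ) * Proj * (U : Matrix (Fin d) (Fin d) ℂ)ᴴ * A *
          ((U : Matrix (Fin d) (Fin d) ℂ) * Proj * (U : Matrix (Fin d) (Fin d) ℂ)ᴴ) * B).trace ∂μ)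
      = ((r : ℂ) * ((r : ℂ) * (d : ℂ) - 1) * (A * B).trace
          + (r : ℂ) * ((d : ℂ) - (r : ℂ)) * A.trace * B.trace)
        / ((d : ℂ) * ((d : ℂ) ^ 2 - 1)) :=
  haar_second_moment_trace_general hd μ Proj hproj hrank A B
end

section
/- Let r ≥ 1 be a natural number and let δ : Fin r → ℝ satisfy 1 + r·δ_i ≥ 0 for every i and ∑_i |δ_i| ≤ 1/2. Then ∑_{i} | √((1 + r·δ_i) / (∑_j (1 + r·δ_j))) − (1 + r·δ_i)/√r | ≤ 5·r·√(∑_i δ_i²). (Note that ∑_j (1 + r·δ_j) ≥ r/2 > 0 under the hypotheses, so the square root is well defined.) -/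
/-!
With `a i = 1 + r δ i` and `S = ∑ a`, split
`√(a i / S) - a i / √r = √(a i) (1/√S - 1/√r) + √(a i) (1 - √(a i)) / √r`.
By Cauchy–Schwarz `∑ √(a i) ≤ √(r S)` and `|√r - √S| ≤ |r - S| / √r ≤ ‖a - 1‖₂`, so the first
parts sum to at most `‖a - 1‖₂`; since `|1 - √x| ≤ |1 - x|`, Cauchy–Schwarz bounds the second
parts by `√(S / r) ‖a - 1‖₂`. Finally `‖a - 1‖₂ = r ‖δ‖₂` and `S / r = 1 + ∑ δ ≤ 3/2`.
-/

open Finset Real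

lemma abs_sqrt_sub_one_le_abs_sub_one {x : ℝ} (hx : 0 ≤ x) : |√x - 1| ≤ |x - 1| := by
  have hfactor : x - 1 = (√x - 1) * (√x + 1) := by
    nlinarith [sq_sqrt hx]
  rw [hfactor, abs_mul]
  refine le_mul_of_one_le_right (abs_nonneg _) ?_
  rw [abs_of_nonneg (by positivity)]
  linarith [sqrt_nonneg x]

lemma abs_sqrt_sub_sqrt_le_abs_sub_div {x y : ℝ} (hx : 0 < x) (hy : 0 ≤ y) :
    |√x - √y| ≤ |x - y| / √x := by
  have hfactor : x - y = (√x - √y) * (√x + √y) := by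
    nlinarith [sq_sqrt hx.le, sq_sqrt hy]
  rw [le_div_iff₀ (sqrt_pos.2 hx), hfactor, abs_mul,
    abs_of_nonneg (add_nonneg (sqrt_nonneg x) (sqrt_nonneg y))]
  exact mul_le_mul_of_nonneg_left (le_add_of_nonneg_right (sqrt_nonneg y)) (abs_nonneg _)

lemma sum_sqrt_mul_abs_le_sqrt_mul_sqrt {ι : Type*} (s : Finset ι) {a : ι → ℝ}
    (ha : ∀ i, 0 ≤ a i) (b : ι → ℝ) :
    ∑ i ∈ s, √(a i) * |b i| ≤ √(∑ i ∈ s, a i) * √(∑ i ∈ s, b i ^ 2) := by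
  simpa [sq_sqrt (ha _), sq_abs] using
    sum_mul_le_sqrt_mul_sqrt s (fun i ↦ √(a i)) (fun i ↦ |b i|)

lemma abs_sqrt_div_sub_div_sqrt_le {a S n : ℝ} (ha : 0 ≤ a) (hS : 0 < S) (hn : 0 < n) :
    |√(a / S) - a / √n| ≤ √a * (|√n - √S| / (√S * √n)) + √a * |a - 1| / √n := by
  have hsS : 0 < √S := sqrt_pos.2 hS
  have hsn : 0 < √n := sqrt_pos.2 hn
  have hsplit : √(a / S) - a / √n = √a * ((√n - √S) / (√S * √n)) - √a * (√a - 1) / √n := by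
    rw [sqrt_div ha]
    field_simp
    linear_combination √S * sq_sqrt ha
  rw [hsplit]
  refine (abs_sub _ _).trans (add_le_add ?_ ?_)
  · rw [abs_mul, abs_div, abs_of_nonneg (sqrt_nonneg a), abs_of_pos (mul_pos hsS hsn)]
  · rw [abs_div, abs_mul, abs_of_nonneg (sqrt_nonneg a), abs_of_pos hsn]
    gcongr √a * ?_ / _
    exact abs_sqrt_sub_one_le_abs_sub_one ha

theorem sum_abs_sqrt_normalize_sub_div_sqrt_card_le {ι : Type*} [Fintype ι] [Nonempty ι]
    {a : ι → ℝ} (ha : ∀ i, 0 ≤ a i) (hS : 0 < ∑ i, a i) :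
    ∑ i, |√(a i / ∑ j, a j) - a i / √(Fintype.card ι)|
      ≤ (1 + √((∑ i, a i) / Fintype.card ι)) * √(∑ i, (a i - 1) ^ 2) := by
  set S := ∑ i, a i
  set n : ℝ := (Fintype.card ι : ℝ)
  set ε := √(∑ i, (a i - 1) ^ 2)
  have hn : 0 < n := Nat.cast_pos.2 Fintype.card_pos
  have hsn : 0 < √n := sqrt_pos.2 hn
  have hsS : 0 < √S := sqrt_pos.2 hS
  have hsum_sqrt : ∑ i, √(a i) ≤ √S * √n := by
    simpa using sum_sqrt_mul_abs_le_sqrt_mul_sqrt univ ha (fun _ ↦ 1)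
  have hsum_dev : ∑ i, √(a i) * |a i - 1| ≤ √S * ε :=
    sum_sqrt_mul_abs_le_sqrt_mul_sqrt univ ha _
  have hsqrt_dev : |√n - √S| ≤ ε := by
    have hl1 : ∑ i, |a i - 1| ≤ √n * ε := by
      simpa using sum_sqrt_mul_abs_le_sqrt_mul_sqrt univ (fun _ ↦ zero_le_one) (fun i ↦ a i - 1)
    have hnS : |n - S| ≤ ∑ i, |a i - 1| := by
      rw [abs_sub_comm]
      simpa [S, n, sum_sub_distrib] using abs_sum_le_sum_abs (fun i ↦ a i - 1) univ
    calc |√n - √S| ≤ |n - S| / √n := abs_sqrt_sub_sqrt_le_abs_sub_div hn hS.le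
      _ ≤ √n * ε / √n := by gcongr; exact hnS.trans hl1
      _ = ε := by field_simp
  calc ∑ i, |√(a i / S) - a i / √n|
      ≤ ∑ i, (√(a i) * (|√n - √S| / (√S * √n)) + √(a i) * |a i - 1| / √n) :=
        sum_le_sum fun i _ ↦ abs_sqrt_div_sub_div_sqrt_le (ha i) hS hn
    _ = (∑ i, √(a i)) * (|√n - √S| / (√S * √n)) + (∑ i, √(a i) * |a i - 1|) / √n := by
        rw [sum_add_distrib, sum_mul, sum_div]
    _ ≤ (√S * √n) * (|√n - √S| / (√S * √n)) + √S * ε / √n := by gcongr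
    _ = |√n - √S| + √(S / n) * ε := by
        rw [sqrt_div hS.le]; field_simp
    _ ≤ (1 + √(S / n)) * ε := by nlinarith [sqrt_nonneg (S / n)]

theorem sqrt_eigenvalue_perturbation_bound_general (r : ℕ) (δ : Fin r → ℝ)
    (hpos : ∀ i, 0 ≤ 1 + (r : ℝ) * δ i)
    (hsum : ∑ i, |δ i| ≤ 1 / 2) :
    ∑ i, |Real.sqrt ((1 + (r : ℝ) * δ i) / (∑ j, (1 + (r : ℝ) * δ j)))
          - (1 + (r : ℝ) * δ i) / Real.sqrt r|
      ≤ 5 * (r : ℝ) * Real.sqrt (∑ i, (δ i) ^ 2) := by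
  rcases isEmpty_or_nonempty (Fin r) with _ | hnonempty
  · simp
  have hr : (0 : ℝ) < r := Nat.cast_pos.2 (Fin.pos_iff_nonempty.2 hnonempty)
  obtain ⟨hδ_lower, hδ_upper⟩ := abs_le.1 ((abs_sum_le_sum_abs δ univ).trans hsum)
  have htrace : ∑ j, (1 + (r : ℝ) * δ j) = r * (1 + ∑ j, δ j) := by
    simp [sum_add_distrib, ← mul_sum, mul_add]
  have hdev : √(∑ i, (1 + (r : ℝ) * δ i - 1) ^ 2) = r * √(∑ i, δ i ^ 2) := by
    simp_rw [add_sub_cancel_left, mul_pow, ← mul_sum]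
    rw [sqrt_mul (sq_nonneg _), sqrt_sq hr.le]
  have hratio : √((∑ j, (1 + (r : ℝ) * δ j)) / r) ≤ 4 := by
    rw [htrace, mul_div_cancel_left₀ _ hr.ne', sqrt_le_left (by norm_num)]
    linarith
  calc _ ≤ (1 + √((∑ j, (1 + (r : ℝ) * δ j)) / r)) * √(∑ i, (1 + (r : ℝ) * δ i - 1) ^ 2) := by
        simpa using sum_abs_sqrt_normalize_sub_div_sqrt_card_le hpos
          (by rw [htrace]; exact mul_pos hr (by linarith))
    _ ≤ (1 + 4) * (r * √(∑ i, δ i ^ 2)) := by rw [hdev]; gcongr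
    _ = 5 * r * √(∑ i, δ i ^ 2) := by ring

/-- **Eigenvalue form of the trace-norm bound `‖√(σ/Tr σ) − √r·σ‖₁ ≤ O(r·√(∑ δ_i²))`.**
If `1 + r·δ_i ≥ 0` for all `i` and `∑ |δ_i| ≤ 1/2`, then
`∑_i |√((1 + r·δ_i)/∑_j (1 + r·δ_j)) − (1 + r·δ_i)/√r| ≤ 5·r·√(∑ δ_i²)`. -/
theorem sqrt_eigenvalue_perturbation_bound (r : ℕ) (hr : 1 ≤ r) (δ : Fin r → ℝ)
    (hpos : ∀ i, 0 ≤ 1 + (r : ℝ) * δ i)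
    (hsum : ∑ i, |δ i| ≤ 1 / 2) :
    ∑ i, |Real.sqrt ((1 + (r : ℝ) * δ i) / (∑ j, (1 + (r : ℝ) * δ j)))
          - (1 + (r : ℝ) * δ i) / Real.sqrt r|
      ≤ 5 * (r : ℝ) * Real.sqrt (∑ i, (δ i) ^ 2) :=
  sqrt_eigenvalue_perturbation_bound_general r δ hpos hsum
end

section
/- Fix natural numbers N ≥ 2 and 1 ≤ Q ≤ N−1, and distinct indices i ≠ j in Fin N. On the Hilbert space ℂ^{2^N} with standard basis indexed by functions x : Fin N → {0,1}, let P_Q be the diagonal matrix with (P_Q)_{x,x} = 1 if the Hamming weight #{l : x(l) = 1} equals Q and 0 otherwise, and let A be the matrix with A_{y,x} = 1 if x(i) = 0, x(j) = 1, and y agrees with x except that y(i) = 1 and y(j) = 0, and A_{y,x} = 0 otherwise. Then Tr(P_Q · A · P_Q · Aᴴ) = binom(N−2, Q−1), and consequently (1/binom(N,Q)) · Tr(P_Q A P_Q Aᴴ) = Q(N−Q)/(N(N−1)). -/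
open Matrix

/-- The projection `P_Q` onto the charge-`Q` sector: the diagonal matrix selecting the
computational basis states `x : Fin N → Fin 2` of Hamming weight `Q`. -/
def chargeProj (N Q : ℕ) : Matrix (Fin N → Fin 2) (Fin N → Fin 2) ℂ :=
  Matrix.of fun x y =>
    if x = y ∧ (Finset.univ.filter fun l => x l = 1).card = Q then 1 else 0

/-- The operator `A = S_i⁺ S_j⁻`: its entry `A_{y,x}` equals `1` iff `x i = 0`, `x j = 1`, and
`y` agrees with `x` except that `y i = 1` and `y j = 0`. -/
def raiseLower (N : ℕ) (i j : Fin N) : Matrix (Fin N → Fin 2) (Fin N → Fin 2) ℂ :=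
  Matrix.of fun y x =>
    if x i = 0 ∧ x j = 1 ∧ y = Function.update (Function.update x i 1) j 0 then 1 else 0

/-!
`P_Q` is the diagonal matrix of the indicator of Hamming weight `Q`, and `A` is the matrix of the
partial map flipping the bits `i` and `j`, defined on `{x | x i = 0, x j = 1}`. Flipping a `0`
and a `1` preserves Hamming weight, so `Tr(P_Q A P_Q Aᴴ)` counts the bitstrings with `x i = 0`,
`x j = 1` and weight `Q`, i.e. it is `binom(N-2, Q-1)`. The normalized value then follows from
`Q (N - Q) binom(N, Q) = N (N - 1) binom(N - 2, Q - 1)`.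
-/

open Finset Function

section Hamming
variable {ι β : Type*} [Fintype ι] [DecidableEq ι] [Zero β] [DecidableEq β]

theorem hammingNorm_update_zero_add_one {x : ι → β} {i : ι} (hx : x i ≠ 0) :
    hammingNorm (update x i 0) + 1 = hammingNorm x := by
  have : ({l | update x i 0 l ≠ 0} : Finset ι) = ({l | x l ≠ 0} : Finset ι).erase i := by
    ext l; by_cases h : l = i <;> simp [h, update_apply]
  rw [hammingNorm, hammingNorm, this, card_erase_add_one (by simpa using hx)]

theorem hammingNorm_update_of_eq_zero {x : ι → β} {i : ι} {a : β} (hx : x i = 0) (ha : a ≠ 0) :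
    hammingNorm (update x i a) = hammingNorm x + 1 := by
  have := hammingNorm_update_zero_add_one (x := update x i a) (i := i) (by simpa using ha)
  rwa [update_idem, ← hx, update_eq_self, eq_comm] at this

theorem hammingNorm_update_update {x : ι → β} {i j : ι} {a : β} (hij : i ≠ j) (hi : x i = 0)
    (hj : x j ≠ 0) (ha : a ≠ 0) : hammingNorm (update (update x i a) j 0) = hammingNorm x := by
  have := hammingNorm_update_zero_add_one (x := update x i a) (i := j)
    (by simpa [hij.symm] using hj)
  rw [hammingNorm_update_of_eq_zero hi ha] at this
  omega

end Hamming

theorem card_filter_eq_one_eq_hammingNorm {ι : Type*} [Fintype ι] (x : ι → Fin 2) :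
    #{l | x l = 1} = hammingNorm x := by
  refine congrArg card (filter_congr fun l _ => ?_)
  generalize x l = a
  fin_cases a <;> simp

theorem card_filter_hammingNorm_eq_add_one {ι : Type*} [Fintype ι] [DecidableEq ι] {i j : ι}
    (hij : i ≠ j) (k : ℕ) :
    #{x : ι → Fin 2 | x i = 0 ∧ x j = 1 ∧ hammingNorm x = k + 1}
      = (Fintype.card ι - 2).choose k := by
  have hcard : #((univ.erase i).erase j) = Fintype.card ι - 2 := by
    rw [card_erase_of_mem (by simp [hij.symm]), card_erase_of_mem (mem_univ i), card_univ]; rfl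
  have supp_ind (t : Finset ι) : ({l | (if l ∈ t then 1 else 0 : Fin 2) ≠ 0} : Finset ι) = t := by
    ext l; by_cases l ∈ t <;> simp [*]
  have ind_supp (x : ι → Fin 2) :
      (fun l => if l ∈ ({l | x l ≠ 0} : Finset ι) then 1 else 0) = x := by
    funext l; simp only [mem_filter, mem_univ, true_and]; split_ifs <;> omega
  rw [← hcard, ← card_powersetCard]
  refine card_nbij' (fun x => ({l | x l ≠ 0} : Finset ι).erase j)
    (fun t l => if l ∈ insert j t then 1 else 0) ?_ ?_ ?_ ?_
  · intro x hx
    obtain ⟨-, hi, hj, hk⟩ := mem_filter.mp hx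
    refine mem_powersetCard.mpr ⟨fun l hl => ?_, ?_⟩
    · simp only [mem_erase, mem_filter, mem_univ, true_and, and_true] at hl ⊢
      exact ⟨hl.1, by rintro rfl; exact hl.2 hi⟩
    rw [card_erase_of_mem (by simp [hj])]
    exact congrArg (· - 1) hk
  · intro t ht
    obtain ⟨hsub, rfl⟩ := mem_powersetCard.mp ht
    have hit : i ∉ t := fun h => by simpa using hsub h
    have hjt : j ∉ t := fun h => by simpa using hsub h
    refine mem_filter.mpr ⟨mem_univ _, by simp [hij, hit], by simp, ?_⟩
    rw [hammingNorm, supp_ind, card_insert_of_notMem hjt]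
  · intro x hx
    obtain ⟨-, -, hj, -⟩ := mem_filter.mp hx
    simp only [insert_erase (show j ∈ ({l | x l ≠ 0} : Finset ι) by simp [hj]), ind_supp]
  · intro t ht
    have hjt : j ∉ t := fun h => by simpa using (mem_powersetCard.mp ht).1 h
    simp only [supp_ind, erase_insert hjt]

theorem Matrix.trace_diagonal_mul_mul_diagonal_mul_conjTranspose_of_partialMap {n α : Type*}
    [Fintype n] [DecidableEq n] [Semiring α] [StarRing α] (p : n → Prop) [DecidablePred p]
    (f : n → n) (A : Matrix n n α) (hA : ∀ y x, A y x = if p x ∧ y = f x then 1 else 0)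
    (d e : n → α) :
    trace (diagonal d * A * diagonal e * Aᴴ) = ∑ x with p x, d (f x) * e x := by
  have hDAE : ∀ y x, (diagonal d * A * diagonal e) y x = d y * A y x * e x := by
    simp [mul_diagonal, diagonal_mul]
  simp only [trace, diag_apply, mul_apply (M := diagonal d * A * diagonal e), hDAE,
    conjTranspose_apply, hA]
  rw [sum_comm, sum_filter]
  refine sum_congr rfl fun x _ => ?_
  by_cases hx : p x <;> simp [hx]

theorem chargeProj_eq_diagonal (N Q : ℕ) :
    chargeProj N Q = diagonal fun x => if hammingNorm x = Q then 1 else 0 := by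
  ext x y
  simp [chargeProj, diagonal_apply, card_filter_eq_one_eq_hammingNorm, ite_and, eq_comm]

theorem trace_chargeProj_mul_raiseLower_mul_chargeProj_mul_conjTranspose {N : ℕ} {i j : Fin N}
    (hij : i ≠ j) (k : ℕ) :
    trace (chargeProj N (k + 1) * raiseLower N i j * chargeProj N (k + 1) * (raiseLower N i j)ᴴ)
      = (N - 2).choose k := by
  rw [chargeProj_eq_diagonal, trace_diagonal_mul_mul_diagonal_mul_conjTranspose_of_partialMap
    (fun x => x i = 0 ∧ x j = 1) (fun x => update (update x i 1) j 0) _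
    (fun y x => by simp only [raiseLower, of_apply, and_assoc])]
  calc _ = ∑ x with x i = 0 ∧ x j = 1, if hammingNorm x = k + 1 then (1 : ℂ) else 0 := by
        refine sum_congr rfl fun x hx => ?_
        rw [mem_filter] at hx
        rw [hammingNorm_update_update hij hx.2.1 (by simp [hx.2.2]) one_ne_zero]
        split_ifs <;> simp
    _ = (N - 2).choose k := by
        simp only [sum_boole, filter_filter, and_assoc]
        rw [card_filter_hammingNorm_eq_add_one hij, Fintype.card_fin]

theorem Nat.add_one_mul_sub_mul_choose_add_one (n k : ℕ) :
    (k + 1) * (n - (k + 1)) * n.choose (k + 1) = n * (n - 1) * (n - 2).choose k := by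
  obtain hn | ⟨m, rfl⟩ : n < 2 ∨ ∃ m, n = m + 2 := by
    by_cases h : n < 2
    exacts [.inl h, .inr ⟨n - 2, by omega⟩]
  · interval_cases n <;> simp
  · simp only [Nat.add_sub_cancel, show m + 2 - 1 = m + 1 by omega,
      show m + 2 - (k + 1) = m + 1 - k by omega]
    calc (k + 1) * (m + 1 - k) * (m + 2).choose (k + 1)
        = (m + 1 - k) * ((m + 2).choose (k + 1) * (k + 1)) := by ring
      _ = (m + 2) * ((m + 1).choose k * (m + 1 - k)) := by
        rw [← Nat.add_one_mul_choose_eq]; ring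
      _ = (m + 2) * (m + 1) * m.choose k := by
        rw [← Nat.choose_mul_succ_eq]; ring

theorem renyi_one_correlator_charge_sector_general {N Q : ℕ} (hQ1 : 1 ≤ Q)
    (hQ2 : Q ≤ N - 1) (i j : Fin N) (hij : i ≠ j) :
    (chargeProj N Q * raiseLower N i j * chargeProj N Q * (raiseLower N i j)ᴴ).trace
        = ((N - 2).choose (Q - 1) : ℂ)
    ∧ ((N.choose Q : ℂ))⁻¹ *
        (chargeProj N Q * raiseLower N i j * chargeProj N Q * (raiseLower N i j)ᴴ).trace
        = ((Q : ℂ) * ((N : ℂ) - (Q : ℂ))) / ((N : ℂ) * ((N : ℂ) - 1)) := by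
  obtain ⟨k, rfl⟩ : ∃ k, Q = k + 1 := ⟨Q - 1, by omega⟩
  have htrace := trace_chargeProj_mul_raiseLower_mul_chargeProj_mul_conjTranspose hij k
  rw [Nat.add_sub_cancel]
  refine ⟨htrace, ?_⟩
  have hchoose : (N.choose (k + 1) : ℂ) ≠ 0 := by exact_mod_cast (Nat.choose_pos (by omega)).ne'
  have hN : (N : ℂ) ≠ 0 := by exact_mod_cast (by omega : N ≠ 0)
  have hN1 : (N : ℂ) - 1 ≠ 0 := sub_ne_zero.mpr (by exact_mod_cast (by omega : N ≠ 1))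
  have hidentity := congrArg (Nat.cast (R := ℂ)) (Nat.add_one_mul_sub_mul_choose_add_one N k)
  push_cast [Nat.cast_sub (by omega : k + 1 ≤ N), Nat.cast_sub (by omega : 1 ≤ N)] at hidentity ⊢
  rw [htrace, inv_mul_eq_div, div_eq_div_iff hchoose (mul_ne_zero hN hN1)]
  linear_combination -hidentity

/-- **Rényi-1 correlator of the maximally mixed charge-sector state.**  For `N ≥ 2`,
`1 ≤ Q ≤ N−1`, and distinct sites `i ≠ j`,
`Tr(P_Q A P_Q Aᴴ) = binom(N−2, Q−1)`, hence
`(1/binom(N,Q))·Tr(P_Q A P_Q Aᴴ) = Q(N−Q)/(N(N−1))`. -/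
theorem renyi_one_correlator_charge_sector {N Q : ℕ} (hN : 2 ≤ N) (hQ1 : 1 ≤ Q)
    (hQ2 : Q ≤ N - 1) (i j : Fin N) (hij : i ≠ j) :
    (chargeProj N Q * raiseLower N i j * chargeProj N Q * (raiseLower N i j)ᴴ).trace
        = ((N - 2).choose (Q - 1) : ℂ)
    ∧ ((N.choose Q : ℂ))⁻¹ *
        (chargeProj N Q * raiseLower N i j * chargeProj N Q * (raiseLower N i j)ᴴ).trace
        = ((Q : ℂ) * ((N : ℂ) - (Q : ℂ))) / ((N : ℂ) * ((N : ℂ) - 1)) :=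
  renyi_one_correlator_charge_sector_general hQ1 hQ2 i j hij
end
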